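/- Let n ≥ 1, let A and B be Hermitian n×n complex matrices all of whose eigenvalues lie in the open interval (−1,1), let f, g ∈ 𝔥, and let X be an arbitrary n×n complex matrix. Then for each choice of sign ε ∈ {+1, −1}, ‖f(A)X + ε·Xg(B)‖₂ ≤ ‖(1/d_A)(X + |A|X) + (1/d_B)(X + X|B|)‖₂. -/

import Mathlib

/-!
Conjugating by eigenvector unitaries of `A` and `B` turns `X ↦ φ(A) X + X ψ(B)` into the Schur
multiplier `Y ↦ [(φ(λᵢ) + ψ(μⱼ)) Yᵢⱼ]`. The Frobenius norm is unitarily invariant and monotone in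
the moduli of the entries, so both sides can be compared entry by entry, where the bound
`|f(λ)| ≤ (1 + |λ|) / (1 - |λ|) ≤ (1 + |λ|) / d_A` for `f ∈ 𝔥` is Carathéodory's: the Cayley
transform `(f - 1) / (f + 1)` maps the disk into itself and fixes `0`, so the Schwarz lemma applies.
-/

open Matrix
open scoped ComplexOrder

/-- `f(A)` for a Hermitian matrix `A`, defined via the spectral decomposition:
`f(A) = U diag(f(λ₁),…,f(λₙ)) U*`. -/
noncomputable def herFun {n : ℕ} {A : Matrix (Fin n) (Fin n) ℂ} (hA : A.IsHermitian)
    (f : ℂ → ℂ) : Matrix (Fin n) (Fin n) ℂ :=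
  (hA.eigenvectorUnitary : Matrix (Fin n) (Fin n) ℂ) *
    Matrix.diagonal (fun i => f (hA.eigenvalues i : ℂ)) *
    star (hA.eigenvectorUnitary : Matrix (Fin n) (Fin n) ℂ)

/-- `|X| = (X*X)^{1/2}`, the positive semidefinite absolute value of a matrix. -/
noncomputable def matAbs {n : ℕ} (X : Matrix (Fin n) (Fin n) ℂ) : Matrix (Fin n) (Fin n) ℂ :=
  ((Matrix.posSemidef_conjTranspose_mul_self X).1.eigenvectorUnitary : Matrix (Fin n) (Fin n) ℂ) *
    Matrix.diagonal (fun i =>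
      ((Real.sqrt ((Matrix.posSemidef_conjTranspose_mul_self X).1.eigenvalues i) : ℝ) : ℂ)) *
    star ((Matrix.posSemidef_conjTranspose_mul_self X).1.eigenvectorUnitary :
      Matrix (Fin n) (Fin n) ℂ)

/-- `d_A = min { 1 - |λⱼ| }`, the distance from the unit circle to the spectrum of a
Hermitian matrix `A` whose eigenvalues lie in `(-1,1)`. -/
noncomputable def dDist {n : ℕ} {A : Matrix (Fin n) (Fin n) ℂ} (hA : A.IsHermitian) : ℝ :=
  ⨅ i, (1 - |hA.eigenvalues i|)

/-- Membership in the class `𝔥`: analytic on the open unit disk, positive real part there,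
and value `1` at the origin. -/
def MemH (f : ℂ → ℂ) : Prop :=
  DifferentiableOn ℂ f (Metric.ball (0 : ℂ) 1) ∧
    (∀ z ∈ Metric.ball (0 : ℂ) 1, 0 < (f z).re) ∧ f 0 = 1

/-- A function `N` on `n × n` complex matrices is a unitarily invariant norm. -/
def IsUnitarilyInvariantNorm {m : Type*} [Fintype m] [DecidableEq m]
    (N : Matrix m m ℂ → ℝ) : Prop :=
  (∀ X, N X = 0 ↔ X = 0) ∧
    (∀ (c : ℂ) X, N (c • X) = ‖c‖ * N X) ∧
    (∀ X Y, N (X + Y) ≤ N X + N Y) ∧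
    (∀ (U V : Matrix.unitaryGroup m ℂ) (X : Matrix m m ℂ),
      N ((U : Matrix m m ℂ) * X * (V : Matrix m m ℂ)) = N X)
/-- The Frobenius (Hilbert–Schmidt, Schatten 2-) norm of a matrix. -/
noncomputable def frobNorm {n : ℕ} (X : Matrix (Fin n) (Fin n) ℂ) : ℝ :=
  Real.sqrt (∑ i, ∑ j, ‖X i j‖ ^ 2)

lemma Complex.norm_sub_one_lt_norm_add_one {w : ℂ} (hw : 0 < w.re) : ‖w - 1‖ < ‖w + 1‖ := by
  rw [← sq_lt_sq₀ (norm_nonneg _) (norm_nonneg _), Complex.sq_norm, Complex.sq_norm,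
    Complex.normSq_apply, Complex.normSq_apply]
  simp only [Complex.sub_re, Complex.sub_im, Complex.add_re, Complex.add_im, Complex.one_re,
    Complex.one_im]
  nlinarith

lemma Complex.norm_le_of_norm_div_add_one_le {w : ℂ} {r : ℝ} (hw : w + 1 ≠ 0)
    (h : ‖(w - 1) / (w + 1)‖ ≤ r) (hr : r < 1) : ‖w‖ ≤ (1 + r) / (1 - r) := by
  set u := (w - 1) / (w + 1)
  have hu : ‖u‖ < 1 := h.trans_lt hr
  have hsub : 1 - u ≠ 0 := fun h0 => by
    rw [← sub_eq_zero.mp h0, norm_one] at hu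
    exact hu.false
  have hw_eq : w = (1 + u) / (1 - u) := by
    rw [eq_div_iff hsub]
    linear_combination -(div_mul_cancel₀ (w - 1) hw)
  have hpos : 0 < 1 - ‖u‖ := by linarith
  have hr0 : 0 ≤ r := (norm_nonneg u).trans h
  calc ‖w‖ = ‖1 + u‖ / ‖1 - u‖ := by rw [hw_eq, norm_div]
    _ ≤ (1 + ‖u‖) / (1 - ‖u‖) := by
        gcongr
        · exact (norm_add_le _ _).trans_eq (by rw [norm_one])
        · simpa using norm_sub_norm_le (1 : ℂ) u
    _ ≤ (1 + r) / (1 - r) := by gcongr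

lemma MemH.norm_le {f : ℂ → ℂ} (hf : MemH f) {z : ℂ} (hz : ‖z‖ < 1) :
    ‖f z‖ ≤ (1 + ‖z‖) / (1 - ‖z‖) := by
  obtain ⟨hdiff, hre, h0⟩ := hf
  have hden : ∀ w ∈ Metric.ball (0 : ℂ) 1, f w + 1 ≠ 0 := fun w hw h => by
    have := congrArg Complex.re h
    simp only [Complex.add_re, Complex.one_re, Complex.zero_re] at this
    linarith [hre w hw]
  have hmaps : Set.MapsTo (fun w => (f w - 1) / (f w + 1)) (Metric.ball 0 1)
      (Metric.closedBall 0 1) := fun w hw => by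
    rw [Metric.mem_closedBall, dist_zero_right, norm_div]
    exact div_le_one_of_le₀ (Complex.norm_sub_one_lt_norm_add_one (hre w hw)).le (norm_nonneg _)
  have hschwarz := Complex.norm_le_norm_of_mapsTo_ball
    ((hdiff.sub_const 1).div (hdiff.add_const 1) hden) hmaps (by simp [h0]) hz
  exact Complex.norm_le_of_norm_div_add_one_le (hden z (mem_ball_zero_iff.mpr hz)) hschwarz hz

section Frobenius

variable {n : ℕ}

lemma frobNorm_eq_sqrt_re_trace (M : Matrix (Fin n) (Fin n) ℂ) :
    frobNorm M = Real.sqrt (Mᴴ * M).trace.re := by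
  have htrace : (Mᴴ * M).trace = ∑ j, ∑ i, (starRingEnd ℂ) (M i j) * M i j := by
    simp [Matrix.trace, Matrix.mul_apply]
  rw [frobNorm, htrace, Complex.re_sum, Finset.sum_comm]
  simp_rw [Complex.re_sum, Complex.conj_mul']
  norm_cast

lemma frobNorm_le_frobNorm {M N : Matrix (Fin n) (Fin n) ℂ} (h : ∀ i j, ‖M i j‖ ≤ ‖N i j‖) :
    frobNorm M ≤ frobNorm N := by
  unfold frobNorm
  gcongr with i _ j _
  exact h i j

lemma frobNorm_unitary_mul_mul_unitary {U V : Matrix (Fin n) (Fin n) ℂ}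
    (hU : U ∈ unitaryGroup (Fin n) ℂ) (hV : V ∈ unitaryGroup (Fin n) ℂ)
    (M : Matrix (Fin n) (Fin n) ℂ) : frobNorm (U * M * V) = frobNorm M := by
  have hUU : Uᴴ * U = 1 := mem_unitaryGroup_iff'.mp hU
  have hVV : V * Vᴴ = 1 := mem_unitaryGroup_iff.mp hV
  have hconj : (U * M * V)ᴴ * (U * M * V) = Vᴴ * (Mᴴ * M * V) := by
    rw [conjTranspose_mul, conjTranspose_mul]
    simp only [Matrix.mul_assoc]
    rw [← Matrix.mul_assoc Uᴴ, hUU, Matrix.one_mul]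
  rw [frobNorm_eq_sqrt_re_trace, frobNorm_eq_sqrt_re_trace, hconj, trace_mul_comm,
    Matrix.mul_assoc, hVV, Matrix.mul_one]

end Frobenius

section HerFun

variable {n : ℕ} {A B : Matrix (Fin n) (Fin n) ℂ} (hA : A.IsHermitian) (hB : B.IsHermitian)

local notation "U" => (hA.eigenvectorUnitary : Matrix (Fin n) (Fin n) ℂ)
local notation "V" => (hB.eigenvectorUnitary : Matrix (Fin n) (Fin n) ℂ)

lemma herFun_add (φ ψ : ℂ → ℂ) : herFun hA (φ + ψ) = herFun hA φ + herFun hA ψ := by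
  simp only [herFun, Pi.add_apply, ← diagonal_add, Matrix.mul_add, Matrix.add_mul]

lemma herFun_smul (c : ℂ) (φ : ℂ → ℂ) : herFun hA (c • φ) = c • herFun hA φ := by
  unfold herFun
  rw [← Matrix.smul_mul, ← Matrix.mul_smul, ← diagonal_smul]
  rfl

lemma herFun_one : herFun hA 1 = 1 := by
  simp only [herFun, Pi.one_apply, diagonal_one, Matrix.mul_one]
  exact mem_unitaryGroup_iff.mp hA.eigenvectorUnitary.2

lemma herFun_ofReal_re_eq_cfc (φ : ℝ → ℝ) : herFun hA (fun z => (φ z.re : ℂ)) = cfc φ A := by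
  rw [hA.cfc_eq, IsHermitian.cfc, Unitary.conjStarAlgAut_apply]
  rfl

lemma matAbs_eq_cfc (M : Matrix (Fin n) (Fin n) ℂ) : matAbs M = cfc Real.sqrt (Mᴴ * M) := by
  rw [(posSemidef_conjTranspose_mul_self M).1.cfc_eq, IsHermitian.cfc,
    Unitary.conjStarAlgAut_apply]
  rfl

lemma matAbs_eq_herFun : matAbs A = herFun hA (fun z => ((|z.re| : ℝ) : ℂ)) := by
  have hsq : Aᴴ * A = cfc (fun x : ℝ => x * x) A := by
    rw [hA.eq, cfc_mul (fun x : ℝ => x) (fun x : ℝ => x) A, cfc_id' ℝ A]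
  rw [matAbs_eq_cfc, hsq, ← cfc_comp Real.sqrt (fun x : ℝ => x * x) A]
  simp only [Function.comp_def, Real.sqrt_mul_self_eq_abs]
  exact (herFun_ofReal_re_eq_cfc hA _).symm

lemma herFun_mul_add_mul_herFun (φ ψ : ℂ → ℂ) (X : Matrix (Fin n) (Fin n) ℂ) :
    herFun hA φ * X + X * herFun hB ψ =
      U * of (fun i j => (φ (hA.eigenvalues i) + ψ (hB.eigenvalues j)) * (star U * X * V) i j) *
        star V := by
  have hUU : U * star U = 1 := mem_unitaryGroup_iff.mp hA.eigenvectorUnitary.2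
  have hVV : V * star V = 1 := mem_unitaryGroup_iff.mp hB.eigenvectorUnitary.2
  have hleft : herFun hA φ * X =
      U * (diagonal (fun i => φ (hA.eigenvalues i)) * (star U * X * V)) * star V := by
    simp only [herFun, Matrix.mul_assoc]
    rw [hVV, Matrix.mul_one]
  have hright : X * herFun hB ψ =
      U * ((star U * X * V) * diagonal (fun j => ψ (hB.eigenvalues j))) * star V := by
    simp only [herFun, Matrix.mul_assoc]
    rw [← Matrix.mul_assoc U, hUU, Matrix.one_mul]
  rw [hleft, hright, ← Matrix.add_mul, ← Matrix.mul_add]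
  congr 2
  ext i j
  simp only [Matrix.add_apply, diagonal_mul, mul_diagonal, of_apply]
  ring

lemma frobNorm_herFun_mul_add_mul_herFun_le {φ ψ φ' ψ' : ℂ → ℂ}
    (h : ∀ i j, ‖φ (hA.eigenvalues i) + ψ (hB.eigenvalues j)‖ ≤
      ‖φ' (hA.eigenvalues i) + ψ' (hB.eigenvalues j)‖) (X : Matrix (Fin n) (Fin n) ℂ) :
    frobNorm (herFun hA φ * X + X * herFun hB ψ) ≤
      frobNorm (herFun hA φ' * X + X * herFun hB ψ') := by
  have hU := hA.eigenvectorUnitary.2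
  have hV := Unitary.star_mem hB.eigenvectorUnitary.2
  rw [herFun_mul_add_mul_herFun, herFun_mul_add_mul_herFun,
    frobNorm_unitary_mul_mul_unitary hU hV, frobNorm_unitary_mul_mul_unitary hU hV]
  refine frobNorm_le_frobNorm fun i j => ?_
  simp only [of_apply, norm_mul]
  gcongr
  exact h i j

lemma herFun_smul_one_add_abs (c : ℝ) :
    herFun hA (fun z => ((c * (1 + |z.re|) : ℝ) : ℂ)) = c • (1 + matAbs A) := by
  rw [matAbs_eq_herFun hA, ← herFun_one hA, ← herFun_add, ← Complex.coe_smul, ← herFun_smul]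
  congr 1
  ext z
  simp

end HerFun

section DDist

variable {n : ℕ} {A : Matrix (Fin n) (Fin n) ℂ} (hA : A.IsHermitian)

lemma dDist_le (i : Fin n) : dDist hA ≤ 1 - |hA.eigenvalues i| :=
  ciInf_le (Set.finite_range _).bddBelow i

lemma dDist_nonneg (hAspec : ∀ i, |hA.eigenvalues i| < 1) : 0 ≤ dDist hA :=
  Real.iInf_nonneg fun i => by linarith [hAspec i]

lemma dDist_pos [Nonempty (Fin n)] (hAspec : ∀ i, |hA.eigenvalues i| < 1) : 0 < dDist hA := by
  obtain ⟨i, hi⟩ := exists_eq_ciInf_of_finite (f := fun i => 1 - |hA.eigenvalues i|)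
  rw [dDist, ← hi]
  linarith [hAspec i]

lemma MemH.norm_eigenvalue_le {f : ℂ → ℂ} (hf : MemH f) (hAspec : ∀ i, |hA.eigenvalues i| < 1)
    (i : Fin n) : ‖f (hA.eigenvalues i)‖ ≤ (dDist hA)⁻¹ * (1 + |hA.eigenvalues i|) := by
  have : Nonempty (Fin n) := ⟨i⟩
  have hnorm : ‖(hA.eigenvalues i : ℂ)‖ = |hA.eigenvalues i| := Complex.norm_real _
  calc ‖f (hA.eigenvalues i)‖ ≤ (1 + |hA.eigenvalues i|) / (1 - |hA.eigenvalues i|) := by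
        simpa only [hnorm] using hf.norm_le (hnorm.trans_lt (hAspec i))
    _ ≤ (1 + |hA.eigenvalues i|) / dDist hA := by
        gcongr
        exacts [dDist_pos hA hAspec, dDist_le hA i]
    _ = (dDist hA)⁻¹ * (1 + |hA.eigenvalues i|) := div_eq_inv_mul _ _

end DDist

theorem stmt13_general {n : ℕ}
    {A B : Matrix (Fin n) (Fin n) ℂ} (hA : A.IsHermitian) (hB : B.IsHermitian)
    (hAspec : ∀ i, |hA.eigenvalues i| < 1) (hBspec : ∀ i, |hB.eigenvalues i| < 1)
    {f g : ℂ → ℂ} (hf : MemH f) (hg : MemH g)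
    (X : Matrix (Fin n) (Fin n) ℂ) (ε : ℂ) (hε : ε = 1 ∨ ε = -1) :
    frobNorm (herFun hA f * X + ε • (X * herFun hB g)) ≤
      frobNorm ((dDist hA)⁻¹ • (X + matAbs A * X) + (dDist hB)⁻¹ • (X + X * matAbs B)) := by
  have hlhs : herFun hA f * X + ε • (X * herFun hB g) =
      herFun hA f * X + X * herFun hB (ε • g) := by
    rw [herFun_smul, Matrix.mul_smul]
  have hrhs : (dDist hA)⁻¹ • (X + matAbs A * X) + (dDist hB)⁻¹ • (X + X * matAbs B) =
      herFun hA (fun z => (((dDist hA)⁻¹ * (1 + |z.re|) : ℝ) : ℂ)) * X +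
        X * herFun hB (fun z => (((dDist hB)⁻¹ * (1 + |z.re|) : ℝ) : ℂ)) := by
    rw [herFun_smul_one_add_abs, herFun_smul_one_add_abs, Matrix.smul_mul, Matrix.mul_smul,
      Matrix.add_mul, Matrix.mul_add, Matrix.one_mul, Matrix.mul_one]
  rw [hlhs, hrhs]
  refine frobNorm_herFun_mul_add_mul_herFun_le hA hB (fun i j => ?_) X
  have hεn : ‖ε‖ = 1 := by rcases hε with rfl | rfl <;> simp
  calc ‖f (hA.eigenvalues i) + (ε • g) (hB.eigenvalues j)‖
      ≤ ‖f (hA.eigenvalues i)‖ + ‖g (hB.eigenvalues j)‖ := by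
        refine (norm_add_le _ _).trans_eq ?_
        rw [Pi.smul_apply, norm_smul, hεn, one_mul]
    _ ≤ (dDist hA)⁻¹ * (1 + |hA.eigenvalues i|) + (dDist hB)⁻¹ * (1 + |hB.eigenvalues j|) :=
        add_le_add (hf.norm_eigenvalue_le hA hAspec i) (hg.norm_eigenvalue_le hB hBspec j)
    _ = _ := by
        have hdA := dDist_nonneg hA hAspec
        have hdB := dDist_nonneg hB hBspec
        rw [← Complex.ofReal_add, Complex.norm_real, Complex.ofReal_re, Complex.ofReal_re,
          Real.norm_of_nonneg (by positivity)]

/-- **Theorem 3.3 (first inequality).** -/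
theorem stmt13 {n : ℕ} (hn : 1 ≤ n)
    {A B : Matrix (Fin n) (Fin n) ℂ} (hA : A.IsHermitian) (hB : B.IsHermitian)
    (hAspec : ∀ i, |hA.eigenvalues i| < 1) (hBspec : ∀ i, |hB.eigenvalues i| < 1)
    {f g : ℂ → ℂ} (hf : MemH f) (hg : MemH g)
    (X : Matrix (Fin n) (Fin n) ℂ) (ε : ℂ) (hε : ε = 1 ∨ ε = -1) :
    frobNorm (herFun hA f * X + ε • (X * herFun hB g)) ≤
      frobNorm ((dDist hA)⁻¹ • (X + matAbs A * X) + (dDist hB)⁻¹ • (X + X * matAbs B)) :=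
  stmt13_general hA hB hAspec hBspec hf hg X ε hε
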